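/- Let φ₁,ℏ, φ₂,ℏ : PS → R[[ℏ]] be multiplicative functions on partitioned permutations such that φ_{i,ℏ}(𝒜,α) = ℏ^{|(𝒜,α)|} φ_i(𝒜,α) + o(ℏ^{|(𝒜,α)|}) for functions φ_i : PS → R. If φ₁,ℏ = ζ_ℏ ⊛ φ₂,ℏ (extended convolution with the extended zeta function), then φ₁ = ζ ∗ φ₂ (ordinary convolution with the zeta function). -/

import Mathlib

open Equiv

/-- The setoid on `β` whose classes are the supports of the cycles of `α`
(fixed points giving singleton classes); this is the partition `𝟎_α`. -/
def cycleSetoid {β : Type*} (α : Equiv.Perm β) : Setoid β :=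
  ⟨α.SameCycle, ⟨fun x => Equiv.Perm.SameCycle.refl α x, fun h => h.symm, fun h h' => h.trans h'⟩⟩

/-- Number of blocks of a set partition (encoded as a setoid). -/
noncomputable def numBlocks {β : Type*} (s : Setoid β) : ℕ :=
  Nat.card (Quotient s)

/-- Number of cycles of a permutation, counting fixed points as cycles. -/
noncomputable def numCycles {β : Type*} (α : Equiv.Perm β) : ℕ :=
  numBlocks (cycleSetoid α)

/-- The colength `|α| = d - #cycles(α)` of a permutation of `Fin d`. -/
noncomputable def permColength {d : ℕ} (α : Equiv.Perm (Fin d)) : ℕ :=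
  d - numCycles α

/-- A partitioned permutation of `[d]`: a pair `(𝒜, α)` of a set partition `𝒜` of `[d]`
and a permutation `α` of `[d]` such that `𝟎_α ≤ 𝒜`, i.e. every cycle support of `α`
is contained in a block of `𝒜`. -/
structure PartPerm (d : ℕ) where
  part : Setoid (Fin d)
  perm : Equiv.Perm (Fin d)
  refines : ∀ x y : Fin d, perm.SameCycle x y → part.r x y

theorem PartPerm.ext' {d : ℕ} {p q : PartPerm d}
    (h1 : p.part = q.part) (h2 : p.perm = q.perm) : p = q := by
  cases p; cases q; simp_all

/-- Colength `|(𝒜,α)| = 2|𝒜| - |α| = 2(d - #𝒜) - (d - #cycles α)`, as an integer. -/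
noncomputable def pairColength {d : ℕ} (s : Setoid (Fin d)) (σ : Equiv.Perm (Fin d)) : ℤ :=
  2 * ((d : ℤ) - numBlocks s) - ((d : ℤ) - numCycles σ)

noncomputable def PartPerm.colength {d : ℕ} (p : PartPerm d) : ℤ :=
  pairColength p.part p.perm

/-- Cycle supports of `α∘β` lie in blocks of `𝒜 ∨ ℬ`: closure of partitioned
permutations under the extended multiplication. -/
theorem refines_mul {d : ℕ} {A B : Setoid (Fin d)} {α β : Equiv.Perm (Fin d)}
    (hA : ∀ x y, α.SameCycle x y → A.r x y) (hB : ∀ x y, β.SameCycle x y → B.r x y) :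
    ∀ x y, (α * β).SameCycle x y → (A ⊔ B).r x y := by
  classical
  have hle1 : ∀ x y : Fin d, A.r x y → (A ⊔ B).r x y := fun x y h =>
    Setoid.le_def.mp (le_sup_left : A ≤ A ⊔ B) h
  have hle2 : ∀ x y : Fin d, B.r x y → (A ⊔ B).r x y := fun x y h =>
    Setoid.le_def.mp (le_sup_right : B ≤ A ⊔ B) h
  have step : ∀ z : Fin d, (A ⊔ B).r z ((α * β) z) := by
    intro z
    refine (A ⊔ B).trans (hle2 z (β z) (hB z (β z) ⟨1, by simp⟩)) ?_
    exact hle1 (β z) (α (β z)) (hA (β z) (α (β z)) ⟨1, by simp⟩)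
  have key : ∀ n : ℕ, ∀ z : Fin d, (A ⊔ B).r z (((α * β) ^ n) z) := by
    intro n
    induction n with
    | zero => intro z; simpa using (A ⊔ B).refl z
    | succ n ih =>
      intro z
      have h1 := ih z
      have h2 := step (((α * β) ^ n) z)
      have h3 : ((α * β) ^ (n + 1)) z = (α * β) (((α * β) ^ n) z) := by
        rw [pow_succ']
        simp [Equiv.Perm.mul_apply]
      rw [h3]
      exact (A ⊔ B).trans h1 h2
  intro x y h
  obtain ⟨i, hi0, _, hi⟩ := Equiv.Perm.SameCycle.exists_pow_eq (α * β) h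
  rw [← hi]
  exact key i x

/-- The unit partitioned permutation `(𝟎_id, id)`. -/
def PartPerm.one (d : ℕ) : PartPerm d :=
  ⟨⊥, 1, fun x y h => by
    have hxy : x = y := Equiv.Perm.sameCycle_one.mp h
    subst hxy
    exact (⊥ : Setoid (Fin d)).refl x⟩

/-- The extended multiplication `(𝒜,α) ⊙ (ℬ,β) = (𝒜 ∨ ℬ, α∘β)` of partitioned
permutations. -/
def PartPerm.mul {d : ℕ} (p q : PartPerm d) : PartPerm d :=
  ⟨p.part ⊔ q.part, p.perm * q.perm, refines_mul p.refines q.refines⟩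

instance {d : ℕ} : Finite (Setoid (Fin d)) :=
  Finite.of_injective (fun s => s.r) (fun s t h => by cases s; cases t; simp_all)

instance {d : ℕ} : Finite (PartPerm d) :=
  Finite.of_injective (fun p => (p.part, p.perm))
    (fun p q h => PartPerm.ext' (congrArg Prod.fst h) (congrArg Prod.snd h))

/-- The cycle type of a permutation of a finite type, including fixed points
as cycles of length `1`; as a multiset, this is a partition of the cardinality. -/
noncomputable def fullCycleType {β : Type*} [Finite β] (α : Equiv.Perm β) : Multiset ℕ :=
  letI := Fintype.ofFinite β
  letI := Classical.decEq β
  Multiset.replicate (Nat.card β - α.cycleType.sum) 1 + α.cycleType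

/-- Each block of a partitioned permutation is invariant under the permutation, which
therefore restricts to a permutation `α|_A` of the block. -/
def blockPerm {d : ℕ} (p : PartPerm d) (c : Quotient p.part) :
    Equiv.Perm {x : Fin d // Quotient.mk p.part x = c} :=
  p.perm.subtypePerm (by
    intro x
    have h : p.part.r x (p.perm x) := p.refines x (p.perm x) ⟨1, by simp⟩
    have h' : Quotient.mk p.part x = Quotient.mk p.part (p.perm x) := Quotient.sound h
    constructor <;> intro hx <;> simp_all)

/-- A function on partitioned permutations of `[d]` is multiplicative if it is of the
form `f(𝒜,α) = Π_{A ∈ 𝒜} g(λ(α|_A))` where `g` is a function of the cycle type only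
(this encodes that `f(𝟏_d,σ)` depends only on the conjugacy class of `σ`, together
with the factorisation over blocks). -/
def IsMultiplicativeFn {R : Type*} [CommRing R] {d : ℕ} (f : PartPerm d → R) : Prop :=
  ∃ g : Multiset ℕ → R, ∀ p : PartPerm d,
    f p = ∏ᶠ c : Quotient p.part, g (fullCycleType (blockPerm p c))

/-- The extended convolution `(f₁ ⊛ f₂)(𝒞,γ) = Σ_{(𝒜,α)⊙(ℬ,β)=(𝒞,γ)} f₁(𝒜,α) f₂(ℬ,β)`. -/
noncomputable def extConv {R : Type*} [CommRing R] {d : ℕ} (f g : PartPerm d → R) :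
    PartPerm d → R :=
  open scoped Classical in
  fun c => ∑ᶠ q : PartPerm d × PartPerm d,
    if q.1.mul q.2 = c then f q.1 * g q.2 else 0

/-- The convolution `(f₁ ∗ f₂)(𝒞,γ)`, summing only over factorisations for which the
colengths add up: `|(𝒜,α)| + |(ℬ,β)| = |(𝒞,γ)|`. -/
noncomputable def starConv {R : Type*} [CommRing R] {d : ℕ} (f g : PartPerm d → R) :
    PartPerm d → R :=
  open scoped Classical in
  fun c => ∑ᶠ q : PartPerm d × PartPerm d,
    if q.1.mul q.2 = c ∧ q.1.colength + q.2.colength = c.colength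
    then f q.1 * g q.2 else 0

/-- The zeta function on partitioned permutations: `ζ(𝒜,α) = 1` if `𝒜 = 𝟎_α`, else `0`. -/
noncomputable def zetaFn (R : Type*) [CommRing R] {d : ℕ} : PartPerm d → R :=
  open scoped Classical in
  fun p => if p.part = cycleSetoid p.perm then 1 else 0

/-- The extended zeta function `ζ_ℏ(𝒜,α) = ℏ^{|α|}` if `𝒜 = 𝟎_α`, else `0`. -/
noncomputable def zetaHbarFn (R : Type*) [CommRing R] {d : ℕ} : PartPerm d → PowerSeries R :=
  open scoped Classical in
  fun p => if p.part = cycleSetoid p.perm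
    then (PowerSeries.X : PowerSeries R) ^ permColength p.perm else 0

/-- `φ_ℏ(𝒜,α) = ℏ^{|(𝒜,α)|} φ(𝒜,α) + o(ℏ^{|(𝒜,α)|})`: all coefficients of `φ_ℏ(𝒜,α)`
below the colength vanish, and the coefficient at the colength is `φ(𝒜,α)`. -/
def IsLeadingOrder {R : Type*} [CommRing R] {d : ℕ}
    (φℏ : PartPerm d → PowerSeries R) (φ : PartPerm d → R) : Prop :=
  ∀ p : PartPerm d,
    (∀ n : ℕ, (n : ℤ) < p.colength → PowerSeries.coeff n (φℏ p) = 0) ∧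
    PowerSeries.coeff p.colength.toNat (φℏ p) = φ p

/-!
Compare the coefficients of `ℏ^{|(𝒞,γ)|}` in `φ₁,ℏ = ζ_ℏ ⊛ φ₂,ℏ`. A factorisation
`(𝟎_α,α) ⊙ (ℬ,β) = (𝒞,γ)` contributes `ℏ^{|α|} φ₂,ℏ(ℬ,β)`, whose expansion starts at order
`|α| + |(ℬ,β)| ≥ |(𝒞,γ)|` by subadditivity of the colength; so it contributes `φ₂(ℬ,β)` when the
colengths add up and nothing otherwise. Subadditivity combines the semimodularity of the
partition lattice with the genus inequality
`#cycles(α) + #cycles(β) + #cycles(αβ) ≤ d + 2 #(𝟎_α ∨ 𝟎_β)`.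
-/

section Setoid

variable {X : Type*}

def pairSetoid (a b : X) : Setoid X :=
  Relation.EqvGen.setoid fun x y => x = a ∧ y = b

theorem pairSetoid_le_iff {s : Setoid X} {a b : X} : pairSetoid a b ≤ s ↔ s a b :=
  ⟨fun h => h (Relation.EqvGen.rel a b ⟨rfl, rfl⟩),
    fun h => Setoid.eqvGen_le fun _ _ ⟨hx, hy⟩ => hx ▸ hy ▸ h⟩

theorem sup_pairSetoid_eq_self {s : Setoid X} {a b : X} (h : s a b) : s ⊔ pairSetoid a b = s :=
  sup_eq_left.2 (pairSetoid_le_iff.2 h)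

theorem numBlocks_bot : numBlocks (⊥ : Setoid X) = Nat.card X :=
  Nat.card_congr Setoid.quotientBotEquiv

variable [Finite X]

theorem numBlocks_anti {s t : Setoid X} (h : s ≤ t) : numBlocks t ≤ numBlocks s :=
  Nat.card_le_card_of_surjective (Setoid.map_of_le h) (by rintro ⟨x⟩; exact ⟨⟦x⟧, rfl⟩)

theorem numBlocks_le_card (s : Setoid X) : numBlocks s ≤ Nat.card X :=
  numBlocks_bot (X := X) ▸ numBlocks_anti bot_le

theorem numBlocks_sup_pairSetoid_add_one {s : Setoid X} {a b : X} (hab : ¬ s a b) :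
    numBlocks (s ⊔ pairSetoid a b) + 1 = numBlocks s := by
  classical
  -- `s ⊔ pairSetoid a b` is the kernel of `x ↦ ⟦g x⟧`, where `g` moves the block of `b` onto `a`
  let g : X → X := fun x => if s x b then a else x
  have hg : ∀ x, (s ⊔ pairSetoid a b) x (g x) := by
    intro x
    by_cases hx : s x b
    · simp only [g, if_pos hx]
      exact (s ⊔ pairSetoid a b).trans' ((le_sup_left : s ≤ _) hx)
        ((s ⊔ pairSetoid a b).symm' (pairSetoid_le_iff.1 le_sup_right))
    · simp only [g, if_neg hx]
      exact (s ⊔ pairSetoid a b).refl' x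
  have hker : s ⊔ pairSetoid a b = Setoid.ker (Quotient.mk s ∘ g) := by
    refine le_antisymm (sup_le ?_ (pairSetoid_le_iff.2 ?_)) ?_
    · intro x y hxy
      have hb : s x b ↔ s y b := ⟨s.trans' (s.symm' hxy), s.trans' hxy⟩
      by_cases hx : s x b
      · simp [Setoid.ker_def, g, hx, hb.1 hx]
      · simpa [Setoid.ker_def, g, hx, mt hb.2 hx] using Quotient.sound hxy
    · simp [Setoid.ker_def, g, hab]
    · intro x y hxy
      exact (s ⊔ pairSetoid a b).trans' (hg x) ((s ⊔ pairSetoid a b).trans'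
        ((le_sup_left : s ≤ _) (Quotient.exact hxy)) ((s ⊔ pairSetoid a b).symm' (hg y)))
  have hrange : Set.range (Quotient.mk s ∘ g) = {⟦b⟧}ᶜ := by
    ext q
    induction q using Quotient.inductionOn with | h y => ?_
    constructor
    · rintro ⟨x, hx⟩
      by_cases hxb : s x b
      · simpa [← hx, g, hxb, Quotient.eq] using hab
      · simp [← hx, g, hxb, Quotient.eq]
    · intro hy
      have hyb : ¬ s y b := fun h => hy (Quotient.sound h)
      exact ⟨y, by simp [g, hyb]⟩
  rw [hker, numBlocks, Nat.card_congr (Setoid.quotientKerEquivRange _), hrange,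
    Nat.card_coe_set_eq, Set.ncard_compl, Set.ncard_singleton, numBlocks]
  have : Nonempty (Quotient s) := ⟨⟦b⟧⟩
  exact Nat.sub_add_cancel Nat.card_pos

theorem numBlocks_le_numBlocks_sup_pairSetoid_add_one (s : Setoid X) (a b : X) :
    numBlocks s ≤ numBlocks (s ⊔ pairSetoid a b) + 1 := by
  by_cases h : s a b
  · rw [sup_pairSetoid_eq_self h]; omega
  · exact (numBlocks_sup_pairSetoid_add_one h).ge

/-- Semimodularity of the lattice of partitions of a finite set. -/
theorem numBlocks_sup_add_numBlocks_le {s s' : Setoid X} (t : Setoid X) (h : s ≤ s') :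
    numBlocks (s ⊔ t) + numBlocks s' ≤ numBlocks s + numBlocks (s' ⊔ t) := by
  by_cases hs' : s' ≤ s
  · rw [le_antisymm h hs']; omega
  obtain ⟨a, b, hs'ab, hsab⟩ : ∃ a b, s' a b ∧ ¬ s a b := by
    simpa [Setoid.le_def] using hs'
  have hjoin := numBlocks_sup_pairSetoid_add_one hsab
  have hjoin_t := numBlocks_le_numBlocks_sup_pairSetoid_add_one (s ⊔ t) a b
  have ih := numBlocks_sup_add_numBlocks_le t (sup_le h (pairSetoid_le_iff.2 hs'ab))
  rw [sup_right_comm] at ih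
  omega
termination_by numBlocks s
decreasing_by omega

end Setoid

section Perm

variable {X : Type*}

theorem cycleSetoid_le_iff {σ : Perm X} {s : Setoid X} :
    cycleSetoid σ ≤ s ↔ ∀ x, s x (σ x) := by
  refine ⟨fun h x => h ⟨1, rfl⟩, fun h => ?_⟩
  rintro x _ ⟨i, rfl⟩
  induction i using Int.induction_on with
  | zero => exact s.refl' x
  | succ i ih =>
    rw [add_comm, zpow_one_add, Perm.mul_apply]
    exact s.trans' ih (h _)
  | pred i ih =>
    have hstep := h ((σ ^ (-(i : ℤ) - 1)) x)
    rw [← Perm.mul_apply, ← zpow_one_add, add_sub_cancel] at hstep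
    exact s.trans' ih (s.symm' hstep)

theorem cycleSetoid_mul_le (α β : Perm X) :
    cycleSetoid (α * β) ≤ cycleSetoid α ⊔ cycleSetoid β :=
  cycleSetoid_le_iff.2 fun x => (cycleSetoid α ⊔ cycleSetoid β).trans'
    ((le_sup_right : cycleSetoid β ≤ _) (⟨1, rfl⟩ : β.SameCycle x (β x)))
    ((le_sup_left : cycleSetoid α ≤ _) (⟨1, rfl⟩ : α.SameCycle (β x) (α (β x))))

theorem cycleSetoid_one : cycleSetoid (1 : Perm X) = ⊥ :=
  le_bot_iff.1 (cycleSetoid_le_iff.2 fun x => (⊥ : Setoid X).refl' x)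

theorem numCycles_one : numCycles (1 : Perm X) = Nat.card X := by
  rw [numCycles, cycleSetoid_one, numBlocks_bot]

theorem numCycles_le_card [Finite X] (σ : Perm X) : numCycles σ ≤ Nat.card X :=
  numBlocks_le_card _

variable [DecidableEq X]

theorem cycleSetoid_swap_le (a b : X) : cycleSetoid (swap a b) ≤ pairSetoid a b := by
  refine cycleSetoid_le_iff.2 fun x => ?_
  have hab : pairSetoid a b a b := pairSetoid_le_iff.1 le_rfl
  rcases eq_or_ne x a with rfl | hxa
  · rwa [swap_apply_left]
  rcases eq_or_ne x b with rfl | hxb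
  · simpa only [swap_apply_right] using (pairSetoid a x).symm' hab
  · exact (swap_apply_of_ne_of_ne hxa hxb).symm ▸ (pairSetoid a b).refl' x

theorem cycleSetoid_mul_swap_sup (σ : Perm X) (a b : X) :
    cycleSetoid (σ * swap a b) ⊔ pairSetoid a b = cycleSetoid σ ⊔ pairSetoid a b := by
  have key : ∀ τ : Perm X,
      cycleSetoid (τ * swap a b) ⊔ pairSetoid a b ≤ cycleSetoid τ ⊔ pairSetoid a b :=
    fun τ => sup_le ((cycleSetoid_mul_le _ _).trans (sup_le_sup_left (cycleSetoid_swap_le a b) _))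
      le_sup_right
  refine le_antisymm (key σ) ?_
  simpa [mul_assoc] using key (σ * swap a b)

theorem sameCycle_mul_swap_of_not_sameCycle [Finite X] {σ : Perm X} {a b : X}
    (h : ¬ σ.SameCycle a b) : (σ * swap a b).SameCycle a b := by
  -- `σ * swap a b` maps `a ↦ σ b` and then follows the `σ`-cycle of `b`, which avoids `a`
  have hstart : (σ * swap a b).SameCycle a (σ b) := ⟨1, by simp⟩
  have hwalk : ∀ k : ℕ, (σ * swap a b).SameCycle a ((σ ^ (k + 1)) b) := by
    intro k
    induction k with
    | zero => simpa using hstart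
    | succ k ih =>
      by_cases hb : (σ ^ (k + 1)) b = b
      · rwa [pow_succ', Perm.mul_apply, hb]
      have ha : (σ ^ (k + 1)) b ≠ a := fun ha => h ⟨(-(k + 1 : ℕ) : ℤ), by
        rw [zpow_neg, zpow_natCast, Perm.inv_eq_iff_eq, ha]⟩
      refine ih.trans ⟨1, ?_⟩
      rw [zpow_one, Perm.mul_apply, swap_apply_of_ne_of_ne ha hb, ← Perm.mul_apply, ← pow_succ']
  obtain ⟨k, hk⟩ := Nat.exists_eq_succ_of_ne_zero (orderOf_pos σ).ne'
  have := hwalk k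
  rwa [← Nat.succ_eq_add_one, ← hk, pow_orderOf_eq_one, Perm.one_apply] at this

variable [Finite X]

theorem numCycles_mul_swap_add_one {σ : Perm X} {a b : X} (h : ¬ σ.SameCycle a b) :
    numCycles (σ * swap a b) + 1 = numCycles σ := by
  have h' : cycleSetoid (σ * swap a b) a b := sameCycle_mul_swap_of_not_sameCycle h
  unfold numCycles
  rw [← sup_pairSetoid_eq_self h', cycleSetoid_mul_swap_sup]
  exact numBlocks_sup_pairSetoid_add_one h

theorem numCycles_le_numCycles_mul_swap_add_one (σ : Perm X) (a b : X) :
    numCycles σ ≤ numCycles (σ * swap a b) + 1 :=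
  calc numCycles σ ≤ numBlocks (cycleSetoid σ ⊔ pairSetoid a b) + 1 :=
        numBlocks_le_numBlocks_sup_pairSetoid_add_one _ a b
    _ = numBlocks (cycleSetoid (σ * swap a b) ⊔ pairSetoid a b) + 1 := by
        rw [cycleSetoid_mul_swap_sup]
    _ ≤ numCycles (σ * swap a b) + 1 := Nat.add_le_add_right (numBlocks_anti le_sup_left) 1

end Perm

/-- Nonnegativity of the genus of the hypermap `(α, β)` on a finite set. -/
theorem numCycles_add_numCycles_add_numCycles_mul_le {X : Type*} [Finite X] [DecidableEq X]
    (α β : Perm X) :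
    numCycles α + numCycles β + numCycles (α * β)
      ≤ Nat.card X + 2 * numBlocks (cycleSetoid α ⊔ cycleSetoid β) := by
  by_cases hβ : β = 1
  · subst hβ
    rw [mul_one, numCycles_one, cycleSetoid_one, sup_bot_eq]
    change _ ≤ _ + 2 * numCycles α
    omega
  -- split off the transposition `(a b)` with `b = β a`, which increases the number of cycles
  obtain ⟨a, ha⟩ : ∃ a, β a ≠ a := by
    by_contra! h
    exact hβ (Equiv.ext h)
  set b := β a
  set β' := β * swap a b
  have hβ'_swap : β' * swap a b = β := by simp [β', mul_assoc]
  have hβ'_fix : β' b = b := by simp [β', b]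
  have hβ'_not : ¬ β'.SameCycle a b := fun h => ha (h.eq_of_right hβ'_fix).symm
  have hcyc : numCycles β + 1 = numCycles β' := by
    simpa [hβ'_swap] using numCycles_mul_swap_add_one hβ'_not
  have hsup : cycleSetoid α ⊔ cycleSetoid β
      = cycleSetoid α ⊔ cycleSetoid β' ⊔ pairSetoid a b := by
    have hβab : cycleSetoid β a b := ⟨1, rfl⟩
    rw [sup_assoc, cycleSetoid_mul_swap_sup, sup_pairSetoid_eq_self hβab]
  have hαβ : α * β' * swap a b = α * β := by rw [mul_assoc, hβ'_swap]
  have ih := numCycles_add_numCycles_add_numCycles_mul_le α β'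
  by_cases hγ : (α * β').SameCycle a b
  · have hle : pairSetoid a b ≤ cycleSetoid α ⊔ cycleSetoid β' :=
      (pairSetoid_le_iff.2 hγ).trans (cycleSetoid_mul_le α β')
    have hγ_cyc : numCycles (α * β) ≤ numCycles (α * β') + 1 := by
      simpa [β', mul_assoc] using numCycles_le_numCycles_mul_swap_add_one (α * β) a b
    rw [hsup, sup_eq_left.2 hle]
    omega
  · have hγ_cyc := numCycles_mul_swap_add_one hγ
    have hblocks := numBlocks_le_numBlocks_sup_pairSetoid_add_one
      (cycleSetoid α ⊔ cycleSetoid β') a b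
    rw [hαβ] at hγ_cyc
    rw [← hsup] at hblocks
    omega
termination_by Nat.card X - numCycles β
decreasing_by
  change Nat.card X - numCycles β' < _
  have := numCycles_le_card β'
  omega

namespace PartPerm

variable {d : ℕ}

theorem cycleSetoid_le_part (p : PartPerm d) : cycleSetoid p.perm ≤ p.part :=
  fun x y h => p.refines x y h

theorem numCycles_perm_le (p : PartPerm d) : numCycles p.perm ≤ d :=
  (numCycles_le_card p.perm).trans_eq (Nat.card_fin d)

theorem colength_nonneg (p : PartPerm d) : 0 ≤ p.colength := by
  have hblocks := numBlocks_anti p.cycleSetoid_le_part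
  have hcycles := p.numCycles_perm_le
  unfold colength pairColength numCycles at *
  omega

theorem colength_eq_permColength {p : PartPerm d} (h : p.part = cycleSetoid p.perm) :
    p.colength = permColength p.perm := by
  have hcycles := p.numCycles_perm_le
  unfold colength pairColength permColength numCycles at *
  rw [h]
  omega

theorem colength_mul_le (p q : PartPerm d) : (p.mul q).colength ≤ p.colength + q.colength := by
  have hp := numBlocks_sup_add_numBlocks_le q.part p.cycleSetoid_le_part
  have hq := numBlocks_sup_add_numBlocks_le (cycleSetoid p.perm) q.cycleSetoid_le_part
  have hgenus := numCycles_add_numCycles_add_numCycles_mul_le p.perm q.perm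
  rw [sup_comm (cycleSetoid q.perm), sup_comm q.part] at hq
  rw [Nat.card_fin] at hgenus
  dsimp only [colength, pairColength, numCycles, mul] at *
  omega

end PartPerm

theorem coeff_zetaHbarFn_mul {R : Type*} [CommRing R] {d : ℕ}
    {φℏ : PartPerm d → PowerSeries R} {φ : PartPerm d → R} (hφ : IsLeadingOrder φℏ φ)
    (p q : PartPerm d) {n : ℕ} (hn : (n : ℤ) ≤ p.colength + q.colength) :
    PowerSeries.coeff n (zetaHbarFn R p * φℏ q)
      = if p.colength + q.colength = n then zetaFn R p * φ q else 0 := by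
  by_cases hz : p.part = cycleSetoid p.perm
  · have hp := PartPerm.colength_eq_permColength hz
    have hq := q.colength_nonneg
    simp only [zetaHbarFn, zetaFn, if_pos hz, one_mul, PowerSeries.coeff_X_pow_mul']
    split_ifs with hle heq heq
    · rw [← (hφ q).2, show n - permColength p.perm = q.colength.toNat by omega]
    · exact (hφ q).1 _ (by omega)
    · omega
    · rfl
  · simp [zetaHbarFn, zetaFn, hz]

theorem leading_order_of_extConv_zeta_general {R : Type*} [CommRing R] {d : ℕ}
    (φ₁ℏ φ₂ℏ : PartPerm d → PowerSeries R) (φ₁ φ₂ : PartPerm d → R)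
    (hl₁ : IsLeadingOrder φ₁ℏ φ₁) (hl₂ : IsLeadingOrder φ₂ℏ φ₂)
    (hconv : φ₁ℏ = extConv (zetaHbarFn R) φ₂ℏ) :
    φ₁ = starConv (zetaFn R) φ₂ := by
  funext c
  have : Fintype (PartPerm d × PartPerm d) := Fintype.ofFinite _
  have hc : (c.colength.toNat : ℤ) = c.colength := Int.toNat_of_nonneg c.colength_nonneg
  rw [← (hl₁ c).2, hconv, extConv, starConv, finsum_eq_sum_of_fintype,
    finsum_eq_sum_of_fintype, map_sum]
  refine Finset.sum_congr rfl fun ⟨p, q⟩ _ => ?_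
  by_cases hpq : p.mul q = c
  · subst hpq
    rw [if_pos rfl, coeff_zetaHbarFn_mul hl₂ p q (hc ▸ p.colength_mul_le q), hc]
    simp only [true_and]
  · simp [hpq]

/-- If `φ₁,ℏ`, `φ₂,ℏ` are multiplicative with leading behaviour `φ₁`, `φ₂`, then
`φ₁,ℏ = ζ_ℏ ⊛ φ₂,ℏ` implies `φ₁ = ζ ∗ φ₂`. -/
theorem leading_order_of_extConv_zeta {R : Type*} [CommRing R] {d : ℕ}
    (φ₁ℏ φ₂ℏ : PartPerm d → PowerSeries R) (φ₁ φ₂ : PartPerm d → R)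
    (hm₁ : IsMultiplicativeFn φ₁ℏ) (hm₂ : IsMultiplicativeFn φ₂ℏ)
    (hl₁ : IsLeadingOrder φ₁ℏ φ₁) (hl₂ : IsLeadingOrder φ₂ℏ φ₂)
    (hconv : φ₁ℏ = extConv (zetaHbarFn R) φ₂ℏ) :
    φ₁ = starConv (zetaFn R) φ₂ :=
  leading_order_of_extConv_zeta_general φ₁ℏ φ₂ℏ φ₁ φ₂ hl₁ hl₂ hconv
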